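/- Let $R$ be a commutative ring, $G$, $H$, $K$ finite groups, $X \leq H \times G$, $Y \leq K \times H$, $M$ an $RX$-module, and $N$ an $RY$-module. Then there is an isomorphism of $(RK,RG)$-bimodules $$(\mathrm{Ind}_Y^{K\times H} N) \otimes_{RH} (\mathrm{Ind}_X^{H\times G} M) \cong \bigoplus_{t \in [p_2(Y)\backslash H / p_1(X)]} \mathrm{Ind}_{Y * {}^{(t,1)}X}^{K \times G} \big(N \otimes_{R(k_2(Y) \cap {}^t k_1(X))} {}^{(t,1)}M\big),$$ where the action of $(k,g) \in Y * {}^{(t,1)}X$ on $N \otimes M$ is $k\cdot(n \otimes m)\cdot g^{-1} = (k n h^{-1}) \otimes (h^t m g^{-1})$ for any $h \in H$ with $(k,h) \in Y$ and $(h^t, g) \in X$. -/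

import Mathlib

open TensorProduct MulOpposite DirectSum

universe u

attribute [local instance] Classical.propDecidable

open TensorProduct

/-- The relations defining the induced module `R Γ ⊗_{R X} M`: the submodule of
`R Γ ⊗_R M` spanned by the elements `(a x) ⊗ m - a ⊗ (x • m)` for `x ∈ X`. -/
noncomputable def indRel (R Γ : Type*) [CommRing R] [Group Γ] (X : Subgroup Γ)
    (M : Type*) [AddCommGroup M] [Module R M] (ρ : X →* Module.End R M) :
    Submodule R ((MonoidAlgebra R Γ) ⊗[R] M) :=
  Submodule.span R {z | ∃ (γ : Γ) (x : X) (m : M),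
    z = MonoidAlgebra.single (γ * (x : Γ)) (1 : R) ⊗ₜ[R] m -
        MonoidAlgebra.single γ (1 : R) ⊗ₜ[R] (ρ x m)}

/-- The induced module `Ind_X^Γ M = R Γ ⊗_{R X} M`, realized as the quotient of
`R Γ ⊗_R M` by the induction relations. -/
def Ind (R Γ : Type*) [CommRing R] [Group Γ] (X : Subgroup Γ)
    (M : Type*) [AddCommGroup M] [Module R M] (ρ : X →* Module.End R M) :
    Type _ :=
  ((MonoidAlgebra R Γ) ⊗[R] M) ⧸ indRel R Γ X M ρ

noncomputable instance (R Γ : Type*) [CommRing R] [Group Γ] (X : Subgroup Γ)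
    (M : Type*) [AddCommGroup M] [Module R M] (ρ : X →* Module.End R M) :
    AddCommGroup (Ind R Γ X M ρ) :=
  inferInstanceAs (AddCommGroup (((MonoidAlgebra R Γ) ⊗[R] M) ⧸ indRel R Γ X M ρ))

noncomputable instance (R Γ : Type*) [CommRing R] [Group Γ] (X : Subgroup Γ)
    (M : Type*) [AddCommGroup M] [Module R M] (ρ : X →* Module.End R M) :
    Module R (Ind R Γ X M ρ) :=
  inferInstanceAs (Module R (((MonoidAlgebra R Γ) ⊗[R] M) ⧸ indRel R Γ X M ρ))

/-- The canonical generator `(c γ) ⊗ m` of the induced module. -/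
noncomputable def Ind.gen (R Γ : Type*) [CommRing R] [Group Γ] (X : Subgroup Γ)
    (M : Type*) [AddCommGroup M] [Module R M] (ρ : X →* Module.End R M)
    (γ : Γ) (c : R) (m : M) : Ind R Γ X M ρ :=
  Submodule.Quotient.mk (MonoidAlgebra.single γ c ⊗ₜ[R] m)
variable {G H K : Type*} [Group G] [Group H] [Group K]

/-- The star (composition) product `Y * ⁽ᵗ'¹⁾X` of subgroups `Y ≤ K × H`, `X ≤ H × G`. -/
def starSubgroup (X : Subgroup (H × G)) (Y : Subgroup (K × H)) (t : H) :
    Subgroup (K × G) where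
  carrier := {p : K × G | ∃ h : H, (p.1, h) ∈ Y ∧ (t⁻¹ * h * t, p.2) ∈ X}
  one_mem' := ⟨1, by exact Y.one_mem, by simp only [mul_one, inv_mul_cancel]; exact X.one_mem⟩
  mul_mem' := by
    rintro a b ⟨h, hY, hX⟩ ⟨h', hY', hX'⟩
    refine ⟨h * h', ?_, ?_⟩
    · exact Y.mul_mem hY hY'
    · have : ((t⁻¹ * (h * h') * t : H), (a.2 * b.2 : G)) =
        ((t⁻¹ * h * t, a.2) : H × G) * (t⁻¹ * h' * t, b.2) := by
        ext <;> simp <;> group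
      rw [show ((a * b : K × G).2) = a.2 * b.2 from rfl, this]
      exact X.mul_mem hX hX'
  inv_mem' := by
    rintro a ⟨h, hY, hX⟩
    refine ⟨h⁻¹, ?_, ?_⟩
    · have : ((a.1⁻¹ : K), h⁻¹) = ((a.1, h) : K × H)⁻¹ := rfl
      rw [show ((a⁻¹ : K × G).1) = a.1⁻¹ from rfl, this]
      exact Y.inv_mem hY
    · have : ((t⁻¹ * h⁻¹ * t : H), (a.2⁻¹ : G)) = ((t⁻¹ * h * t, a.2) : H × G)⁻¹ := by
        ext <;> simp <;> group
      rw [show ((a⁻¹ : K × G).2) = a.2⁻¹ from rfl, this]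
      exact X.inv_mem hX

variable {R K H G N M : Type u} [CommRing R] [Group K] [Group H] [Group G]
  [AddCommGroup N] [Module R N] [AddCommGroup M] [Module R M]

/-- The relations defining `A ⊗_{RH} B` for an `R(K×H)`-module `A` and an
`R(H×G)`-module `B`: the span of the elements `(a·h) ⊗ b - a ⊗ (h·b)`. -/
def rhRel (A B : Type u) [AddCommGroup A] [Module R A] [AddCommGroup B] [Module R B]
    (ρA : (K × H) →* Module.End R A) (ρB : (H × G) →* Module.End R B) :
    Submodule R (A ⊗[R] B) :=
  Submodule.span R {z | ∃ (h : H) (x : A) (y : B),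
    z = (ρA ((1 : K), h⁻¹) x) ⊗ₜ[R] y - x ⊗ₜ[R] (ρB (h, (1 : G)) y)}

/-- The relations defining `N ⊗_{R(k₂(Y) ∩ ᵗk₁(X))} ⁽ᵗ'¹⁾M` as a quotient of `N ⊗_R M`:
for `h ∈ k₂(Y) ∩ ᵗk₁(X)`, the element `h` acts on `N` on the right via `(1,h) ∈ Y` and on
`M` on the left via `(hᵗ,1) = (t⁻¹ht,1) ∈ X`. -/
def smallRel (X : Subgroup (H × G)) (Y : Subgroup (K × H))
    (ρN : Y →* Module.End R N) (ρM : X →* Module.End R M) (t : H) :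
    Submodule R (N ⊗[R] M) :=
  Submodule.span R {z | ∃ (h : H) (h1 : ((1 : K), h) ∈ Y)
      (h2 : (t⁻¹ * h * t, (1 : G)) ∈ X) (n : N) (m : M),
    z = (ρN ⟨((1 : K), h⁻¹), by simpa using Y.inv_mem h1⟩ n) ⊗ₜ[R] m -
        n ⊗ₜ[R] (ρM ⟨(t⁻¹ * h * t, (1 : G)), h2⟩ m)}

/-- `N ⊗_{R(k₂(Y) ∩ ᵗk₁(X))} ⁽ᵗ'¹⁾M`. -/
def SmallTensor (X : Subgroup (H × G)) (Y : Subgroup (K × H))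
    (ρN : Y →* Module.End R N) (ρM : X →* Module.End R M) (t : H) : Type u :=
  (N ⊗[R] M) ⧸ smallRel X Y ρN ρM t

noncomputable instance (X : Subgroup (H × G)) (Y : Subgroup (K × H))
    (ρN : Y →* Module.End R N) (ρM : X →* Module.End R M) (t : H) :
    AddCommGroup (SmallTensor X Y ρN ρM t) := by
  unfold SmallTensor; infer_instance

noncomputable instance (X : Subgroup (H × G)) (Y : Subgroup (K × H))
    (ρN : Y →* Module.End R N) (ρM : X →* Module.End R M) (t : H) :
    Module R (SmallTensor X Y ρN ρM t) := by
  unfold SmallTensor; infer_instance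


/-!
After moving `h` across, an elementary tensor `[(k, h) ⊗ n] ⊗ [(h', g) ⊗ m]` of the tensor product
over `RH` depends only on `k`, `w = h⁻¹ * h'` and `g`. Write `w = y.2 * t * x.1` with `t` the
representative of the double coset of `w`, `y ∈ Y` and `x ∈ X`: the balancing relations move `y`
into `N` and `x` into `M`, and the tensor is sent to `(k * y.1, g * x.2⁻¹) ⊗ (y⁻¹ n ⊗ x m)` in the
summand of `t`. Two decompositions of `w` through the same `t` differ by an element of `Y * ⁽ᵗ'¹⁾X`,
so this is well defined. The inverse sends `(k, g) ⊗ (n ⊗ m)` in the summand of `t` to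
`[(k, 1) ⊗ n] ⊗ [(t, g) ⊗ m]`; it is visibly `K × G`-equivariant, hence so is the isomorphism.
-/

section SubgroupAction

variable {R S V : Type*} [CommRing R] [Group S] [AddCommGroup V] [Module R V]
  {P : Subgroup S} (ρ : P →* Module.End R V)

lemma act_act_of_mul_eq {a b c : S} (ha : a ∈ P) (hb : b ∈ P) (hc : c ∈ P) (habc : a * b = c)
    (v : V) : ρ ⟨a, ha⟩ (ρ ⟨b, hb⟩ v) = ρ ⟨c, hc⟩ v := by
  subst habc
  rw [← Module.End.mul_apply, ← map_mul]
  rfl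

lemma act_act_eq_act_act {a b c d : S} (ha : a ∈ P) (hb : b ∈ P) (hc : c ∈ P) (hd : d ∈ P)
    (h : a * b = c * d) (v : V) : ρ ⟨a, ha⟩ (ρ ⟨b, hb⟩ v) = ρ ⟨c, hc⟩ (ρ ⟨d, hd⟩ v) := by
  have hab : a * b ∈ P := mul_mem ha hb
  rw [act_act_of_mul_eq ρ ha hb hab rfl, act_act_of_mul_eq ρ hc hd (h ▸ hab) h.symm]

lemma act_of_eq_one {a : S} (ha : a ∈ P) (h : a = 1) (v : V) : ρ ⟨a, ha⟩ v = v := by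
  subst h
  exact congrArg (· v) (map_one ρ)

end SubgroupAction

namespace Ind

variable {R Γ M V : Type*} [CommRing R] [Group Γ] {X : Subgroup Γ}
  [AddCommGroup M] [Module R M] [AddCommGroup V] [Module R V] (ρ : X →* Module.End R M)

noncomputable def mk (γ : Γ) : M →ₗ[R] Ind R Γ X M ρ :=
  (indRel R Γ X M ρ).mkQ ∘ₗ TensorProduct.mk R _ M (MonoidAlgebra.single γ 1)

lemma gen_eq_smul_mk (γ : Γ) (c : R) (m : M) : Ind.gen R Γ X M ρ γ c m = c • mk ρ γ m := by
  change (indRel R Γ X M ρ).mkQ _ = c • (indRel R Γ X M ρ).mkQ _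
  rw [← map_smul, TensorProduct.mk_apply, TensorProduct.smul_tmul', MonoidAlgebra.smul_single',
    mul_one]

lemma mk_act (γ : Γ) (x : X) (m : M) : mk ρ γ (ρ x m) = mk ρ (γ * x) m := by
  refine ((Submodule.Quotient.eq _).2 ?_).symm
  exact Submodule.subset_span ⟨γ, x, m, rfl⟩

lemma mk_act_of_mul_eq {γ γ' x : Γ} (hx : x ∈ X) (h : γ * x = γ') (m : M) :
    mk ρ γ (ρ ⟨x, hx⟩ m) = mk ρ γ' m := by
  rw [mk_act, ← h]

lemma hom_ext {f g : Ind R Γ X M ρ →ₗ[R] V} (h : ∀ γ, f ∘ₗ mk ρ γ = g ∘ₗ mk ρ γ) : f = g :=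
  Submodule.linearMap_qext _ <| TensorProduct.ext <| MonoidAlgebra.lhom_ext' fun γ =>
    LinearMap.ext_ring (h γ)

noncomputable def lift (f : Γ → M →ₗ[R] V) (hf : ∀ γ (x : X) m, f γ (ρ x m) = f (γ * x) m) :
    Ind R Γ X M ρ →ₗ[R] V :=
  (indRel R Γ X M ρ).liftQ (TensorProduct.lift ((MonoidAlgebra.basis Γ R).constr R f)) <| by
    rw [indRel, Submodule.span_le]
    rintro _ ⟨γ, x, m, rfl⟩
    simp [← MonoidAlgebra.basis_apply, hf]

@[simp]
lemma lift_mk (f : Γ → M →ₗ[R] V) (hf) (γ : Γ) (m : M) : lift ρ f hf (mk ρ γ m) = f γ m := by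
  change TensorProduct.lift _ (MonoidAlgebra.single γ 1 ⊗ₜ[R] m) = _
  rw [TensorProduct.lift.tmul, ← MonoidAlgebra.basis_apply, Module.Basis.constr_basis]

section Bilinear

variable {Δ M' : Type*} [Group Δ] {X' : Subgroup Δ} [AddCommGroup M'] [Module R M']
  (ρ' : X' →* Module.End R M')

noncomputable def lift₂ (f : Γ → Δ → M →ₗ[R] M' →ₗ[R] V)
    (hf : ∀ γ δ (x : X) m m', f γ δ (ρ x m) m' = f (γ * x) δ m m')
    (hf' : ∀ γ δ (x' : X') m m', f γ δ m (ρ' x' m') = f γ (δ * x') m m') :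
    Ind R Γ X M ρ →ₗ[R] Ind R Δ X' M' ρ' →ₗ[R] V :=
  lift ρ (fun γ => (lift ρ' (fun δ => (f γ δ).flip) fun δ x' m' => by ext m; exact hf' ..).flip)
    fun γ x m => hom_ext ρ' fun δ => by ext m'; simp [hf]

@[simp]
lemma lift₂_mk_mk (f : Γ → Δ → M →ₗ[R] M' →ₗ[R] V) (hf hf') (γ : Γ) (δ : Δ) (m : M) (m' : M') :
    lift₂ ρ ρ' f hf hf' (mk ρ γ m) (mk ρ' δ m') = f γ δ m m' := by
  simp [lift₂]

end Bilinear

noncomputable def act : Γ →* Module.End R (Ind R Γ X M ρ) where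
  toFun γ := lift ρ (fun δ => mk ρ (γ * δ)) fun δ x m => by rw [mk_act, mul_assoc]
  map_one' := hom_ext ρ fun γ => by ext; simp
  map_mul' γ δ := hom_ext ρ fun ε => by ext; simp [mul_assoc]

@[simp]
lemma act_mk (γ δ : Γ) (m : M) : act ρ γ (mk ρ δ m) = mk ρ (γ * δ) m :=
  lift_mk ρ _ (fun _ _ _ => by rw [mk_act, mul_assoc]) δ m

lemma act_gen (γ δ : Γ) (c : R) (m : M) :
    act ρ γ (Ind.gen R Γ X M ρ δ c m) = Ind.gen R Γ X M ρ (γ * δ) c m := by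
  rw [gen_eq_smul_mk, gen_eq_smul_mk, map_smul, act_mk]

end Ind

section BalancedTensor

variable {R K H G A B : Type u} {V : Type*} [CommRing R] [Group K] [Group H] [Group G]
  [AddCommGroup A] [Module R A] [AddCommGroup B] [Module R B] [AddCommGroup V] [Module R V]
  (ρA : K × H →* Module.End R A) (ρB : H × G →* Module.End R B)

lemma rhRel_le_ker {f : A ⊗[R] B →ₗ[R] V}
    (hf : ∀ (h : H) a b, f (ρA (1, h⁻¹) a ⊗ₜ b) = f (a ⊗ₜ ρB (h, 1) b)) :
    rhRel A B ρA ρB ≤ LinearMap.ker f := by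
  rw [rhRel, Submodule.span_le]
  rintro _ ⟨h, a, b, rfl⟩
  simp [hf]

lemma rhRel_mk_act_inv_tmul (h : H) (a : A) (b : B) :
    (Submodule.Quotient.mk (ρA (1, h⁻¹) a ⊗ₜ[R] b) : (A ⊗[R] B) ⧸ rhRel A B ρA ρB) =
      Submodule.Quotient.mk (a ⊗ₜ ρB (h, 1) b) :=
  (Submodule.Quotient.eq _).2 <| Submodule.subset_span ⟨h, a, b, rfl⟩

lemma rhRel_mk_act_tmul_act (h : H) (a : A) (b : B) :
    (Submodule.Quotient.mk (ρA (1, h) a ⊗ₜ[R] ρB (h, 1) b) : (A ⊗[R] B) ⧸ rhRel A B ρA ρB) =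
      Submodule.Quotient.mk (a ⊗ₜ b) := by
  rw [← rhRel_mk_act_inv_tmul, ← Module.End.mul_apply, ← map_mul]
  simp [Prod.mk_one_one]

noncomputable def balancedAct : K × G →* Module.End R ((A ⊗[R] B) ⧸ rhRel A B ρA ρB) where
  toFun p := (rhRel A B ρA ρB).liftQ
    ((rhRel A B ρA ρB).mkQ ∘ₗ TensorProduct.map (ρA (p.1, 1)) (ρB (1, p.2))) <|
      rhRel_le_ker ρA ρB fun h a b => by
        have hA : ρA (p.1, 1) (ρA (1, h⁻¹) a) = ρA (1, h⁻¹) (ρA (p.1, 1) a) := by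
          simp only [← Module.End.mul_apply, ← map_mul, Prod.mk_mul_mk, mul_one, one_mul]
        have hB : ρB (1, p.2) (ρB (h, 1) b) = ρB (h, 1) (ρB (1, p.2) b) := by
          simp only [← Module.End.mul_apply, ← map_mul, Prod.mk_mul_mk, mul_one, one_mul]
        simp [hA, hB, rhRel_mk_act_inv_tmul]
  map_one' := Submodule.linearMap_qext _ <| TensorProduct.ext' fun a b => by
    simp [Prod.mk_one_one]
  map_mul' p q := Submodule.linearMap_qext _ <| TensorProduct.ext' fun a b => by
    simp only [Module.End.mul_apply, Submodule.liftQ_apply, LinearMap.comp_apply,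
      TensorProduct.map_tmul, Submodule.mkQ_apply]
    simp only [← Module.End.mul_apply, ← map_mul, Prod.mk_mul_mk, mul_one, Prod.fst_mul,
      Prod.snd_mul]

lemma balancedAct_mk (p : K × G) (a : A) (b : B) :
    balancedAct ρA ρB p (Submodule.Quotient.mk (a ⊗ₜ[R] b)) =
      Submodule.Quotient.mk (ρA (p.1, 1) a ⊗ₜ[R] ρB (1, p.2) b) :=
  rfl

end BalancedTensor

def IsDoubleCosetReps {K H G : Type*} [Group K] [Group H] [Group G] (X : Subgroup (H × G))
    (Y : Subgroup (K × H)) (dcReps : Set H) : Prop :=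
  ∀ h : H, ∃! t : H, t ∈ dcReps ∧
    ∃ a ∈ Y.map (MonoidHom.snd K H), ∃ b ∈ X.map (MonoidHom.fst H G), h = a * t * b

namespace IsDoubleCosetReps

variable {K H G : Type*} [Group K] [Group H] [Group G] {X : Subgroup (H × G)}
  {Y : Subgroup (K × H)} {dcReps : Set H}

lemma exists_decomposition (hreps : IsDoubleCosetReps X Y dcReps) (w : H) :
    ∃ d : H × (K × H) × (H × G), d.1 ∈ dcReps ∧ d.2.1 ∈ Y ∧ d.2.2 ∈ X ∧
      w = d.2.1.2 * d.1 * d.2.2.1 := by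
  obtain ⟨t, ⟨ht, _, ⟨y, hy, rfl⟩, _, ⟨x, hx, rfl⟩, hw⟩, -⟩ := hreps w
  exact ⟨(t, y, x), ht, hy, hx, hw⟩

lemma rep_eq (hreps : IsDoubleCosetReps X Y dcReps)
    {w t t' : H} {y y' : K × H} {x x' : H × G} (ht : t ∈ dcReps) (hy : y ∈ Y) (hx : x ∈ X)
    (hw : w = y.2 * t * x.1) (ht' : t' ∈ dcReps) (hy' : y' ∈ Y) (hx' : x' ∈ X)
    (hw' : w = y'.2 * t' * x'.1) : t = t' :=
  (hreps w).unique ⟨ht, _, ⟨y, hy, rfl⟩, _, ⟨x, hx, rfl⟩, hw⟩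
    ⟨ht', _, ⟨y', hy', rfl⟩, _, ⟨x', hx', rfl⟩, hw'⟩

end IsDoubleCosetReps

namespace SmallTensor

variable {R K H G N M : Type u} {V : Type*} [CommRing R] [Group K] [Group H] [Group G]
  [AddCommGroup N] [Module R N] [AddCommGroup M] [Module R M] [AddCommGroup V] [Module R V]
  {X : Subgroup (H × G)} {Y : Subgroup (K × H)}
  (ρN : Y →* Module.End R N) (ρM : X →* Module.End R M) (t : H)

noncomputable def mk : N ⊗[R] M →ₗ[R] SmallTensor X Y ρN ρM t := (smallRel X Y ρN ρM t).mkQ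

lemma hom_ext {f g : SmallTensor X Y ρN ρM t →ₗ[R] V}
    (h : ∀ n m, f (mk ρN ρM t (n ⊗ₜ m)) = g (mk ρN ρM t (n ⊗ₜ m))) : f = g :=
  Submodule.linearMap_qext _ <| TensorProduct.ext' h

noncomputable def lift (f : N ⊗[R] M →ₗ[R] V)
    (hf : ∀ d (h1 : ((1 : K), d) ∈ Y) (h2 : (t⁻¹ * d * t, (1 : G)) ∈ X) n m,
      f (ρN ⟨(1, d⁻¹), by simpa using Y.inv_mem h1⟩ n ⊗ₜ m) = f (n ⊗ₜ ρM ⟨_, h2⟩ m)) :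
    SmallTensor X Y ρN ρM t →ₗ[R] V :=
  (smallRel X Y ρN ρM t).liftQ f <| by
    rw [smallRel, Submodule.span_le]
    rintro _ ⟨d, h1, h2, n, m, rfl⟩
    rw [SetLike.mem_coe, LinearMap.mem_ker, map_sub, hf d h1 h2, sub_self]

@[simp]
lemma lift_mk (f : N ⊗[R] M →ₗ[R] V) (hf) (x : N ⊗[R] M) : lift ρN ρM t f hf (mk ρN ρM t x) = f x :=
  rfl

lemma mk_act_inv_tmul {d : H} (h1 : ((1 : K), d) ∈ Y) (h2 : (t⁻¹ * d * t, (1 : G)) ∈ X)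
    (n : N) (m : M) :
    mk ρN ρM t (ρN ⟨(1, d⁻¹), by simpa using Y.inv_mem h1⟩ n ⊗ₜ m) =
      mk ρN ρM t (n ⊗ₜ ρM ⟨_, h2⟩ m) :=
  (Submodule.Quotient.eq _).2 <| Submodule.subset_span ⟨d, h1, h2, n, m, rfl⟩

lemma mk_act_tmul_act {d : H} (h1 : ((1 : K), d) ∈ Y) (h2 : (t⁻¹ * d * t, (1 : G)) ∈ X)
    (n : N) (m : M) : mk ρN ρM t (ρN ⟨(1, d), h1⟩ n ⊗ₜ ρM ⟨_, h2⟩ m) = mk ρN ρM t (n ⊗ₜ m) := by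
  rw [← mk_act_inv_tmul ρN ρM t h1 h2, act_act_of_mul_eq ρN _ h1 Y.one_mem (by simp)]
  exact congrArg (fun v => mk ρN ρM t (v ⊗ₜ m)) (act_of_eq_one ρN _ rfl n)

noncomputable def act (k : K) (g : G) (h : H) (hY : (k, h) ∈ Y)
    (hX : (t⁻¹ * h * t, g) ∈ X) : Module.End R (SmallTensor X Y ρN ρM t) :=
  lift ρN ρM t (mk ρN ρM t ∘ₗ TensorProduct.map (ρN ⟨_, hY⟩) (ρM ⟨_, hX⟩)) fun d h1 h2 n m => by
    -- conjugation by `h` carries the relation for `d` to the relation for `h * d * h⁻¹`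
    have he1 : ((1 : K), h * d * h⁻¹) ∈ Y := by
      simpa [mul_assoc] using Y.mul_mem (Y.mul_mem hY h1) (Y.inv_mem hY)
    have he2 : (t⁻¹ * (h * d * h⁻¹) * t, (1 : G)) ∈ X := by
      simpa [mul_assoc] using X.mul_mem (X.mul_mem hX h2) (X.inv_mem hX)
    have hN := act_act_eq_act_act ρN (c := (1, (h * d * h⁻¹)⁻¹)) hY (by simpa using Y.inv_mem h1)
      (by simpa using Y.inv_mem he1) hY (Prod.ext (by simp) (by simp [mul_assoc])) n
    have hM := act_act_eq_act_act ρM he2 hX hX h2 (Prod.ext (by simp [mul_assoc]) (by simp)) m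
    simp only [LinearMap.comp_apply, TensorProduct.map_tmul, hN, ← hM]
    exact mk_act_inv_tmul ρN ρM t he1 he2 _ _

lemma act_eq_act {k : K} {g : G} {h h' : H} (hY : (k, h) ∈ Y) (hY' : (k, h') ∈ Y)
    (hX : (t⁻¹ * h * t, g) ∈ X) (hX' : (t⁻¹ * h' * t, g) ∈ X) :
    act ρN ρM t k g h hY hX = act ρN ρM t k g h' hY' hX' := by
  refine hom_ext ρN ρM t fun n m => ?_
  -- the two witnesses differ by `(1, h * h'⁻¹)`, which acts trivially on the small tensor product
  have h1 : ((1 : K), h * h'⁻¹) ∈ Y := by simpa using Y.mul_mem hY (Y.inv_mem hY')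
  have h2 : (t⁻¹ * (h * h'⁻¹) * t, (1 : G)) ∈ X := by
    simpa [mul_assoc] using X.mul_mem hX (X.inv_mem hX')
  simp only [act, lift_mk, LinearMap.comp_apply, TensorProduct.map_tmul]
  rw [← act_act_of_mul_eq ρN h1 hY' hY (Prod.ext (by simp) (by simp)),
    ← act_act_of_mul_eq ρM h2 hX' hX (Prod.ext (by simp [mul_assoc]) (by simp)),
    mk_act_tmul_act]

noncomputable def starAct : starSubgroup X Y t →* Module.End R (SmallTensor X Y ρN ρM t) where
  toFun z := act ρN ρM t _ _ _ z.2.choose_spec.1 z.2.choose_spec.2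
  map_one' := by
    refine (act_eq_act ρN ρM t _ (h' := 1) (by simp [Prod.mk_one_one]) _
      (by simp [Prod.mk_one_one])).trans ?_
    refine hom_ext ρN ρM t fun n m => ?_
    simp [act, act_of_eq_one]
  map_mul' z w := by
    obtain ⟨hYz, hXz⟩ := z.2.choose_spec
    obtain ⟨hYw, hXw⟩ := w.2.choose_spec
    have hX : (t⁻¹ * (z.2.choose * w.2.choose) * t, ((z * w : starSubgroup X Y t) : K × G).2)
        ∈ X := by
      simpa [mul_assoc] using X.mul_mem hXz hXw
    refine (act_eq_act ρN ρM t _ (by exact Y.mul_mem hYz hYw) _ hX).trans ?_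
    refine hom_ext ρN ρM t fun n m => ?_
    simp only [act, lift_mk, LinearMap.comp_apply, TensorProduct.map_tmul, Module.End.mul_apply]
    rw [act_act_of_mul_eq ρN hYz hYw (Y.mul_mem hYz hYw) rfl,
      act_act_of_mul_eq ρM hXz hXw hX (by simp [mul_assoc])]
    rfl

lemma starAct_mk (k : K) (g : G) (h : H) (hY : (k, h) ∈ Y) (hX : (t⁻¹ * h * t, g) ∈ X)
    (n : N) (m : M) :
    starAct ρN ρM t ⟨(k, g), h, hY, hX⟩ (mk ρN ρM t (n ⊗ₜ m)) =
      mk ρN ρM t (ρN ⟨_, hY⟩ n ⊗ₜ ρM ⟨_, hX⟩ m) := by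
  change act ρN ρM t _ _ _ _ _ _ = _
  rw [act_eq_act ρN ρM t _ hY _ hX]
  rfl

end SmallTensor

namespace Mackey

variable {R K H G N M : Type u} {V : Type*} [CommRing R] [Group K] [Group H] [Group G]
  [AddCommGroup N] [Module R N] [AddCommGroup M] [Module R M] [AddCommGroup V] [Module R V]
  {X : Subgroup (H × G)} {Y : Subgroup (K × H)}
  (ρN : Y →* Module.End R N) (ρM : X →* Module.End R M)

local notation "IndN" => Ind R (K × H) Y N ρN
local notation "IndM" => Ind R (H × G) X M ρM
local notation "TensorInd" => (IndN ⊗[R] IndM) ⧸ rhRel IndN IndM (Ind.act ρN) (Ind.act ρM)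
local notation "IndStar" t =>
  Ind R (K × G) (starSubgroup X Y t) (SmallTensor X Y ρN ρM t) (SmallTensor.starAct ρN ρM t)

lemma tensorInd_hom_ext {f g : TensorInd →ₗ[R] V}
    (h : ∀ p q n m, f (Submodule.Quotient.mk (Ind.mk ρN p n ⊗ₜ Ind.mk ρM q m)) =
      g (Submodule.Quotient.mk (Ind.mk ρN p n ⊗ₜ Ind.mk ρM q m))) : f = g :=
  Submodule.linearMap_qext _ <| TensorProduct.ext <| Ind.hom_ext ρN fun p =>
    LinearMap.ext fun n => Ind.hom_ext ρM fun q => LinearMap.ext fun m => h p q n m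

lemma mk_tmul_mk_eq_of_mul_left {p p' : K × H} {q q' : H × G} (h : H) (hp : (1, h) * p = p')
    (hq : (h, 1) * q = q') (n : N) (m : M) :
    (Submodule.Quotient.mk (Ind.mk ρN p' n ⊗ₜ Ind.mk ρM q' m) : TensorInd) =
      Submodule.Quotient.mk (Ind.mk ρN p n ⊗ₜ Ind.mk ρM q m) := by
  rw [← hp, ← hq, ← Ind.act_mk, ← Ind.act_mk, rhRel_mk_act_tmul_act]

noncomputable def smallTensorToTensor (t : H) (p : K × G) :
    SmallTensor X Y ρN ρM t →ₗ[R] TensorInd :=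
  SmallTensor.lift ρN ρM t ((rhRel IndN IndM (Ind.act ρN) (Ind.act ρM)).mkQ ∘ₗ
      TensorProduct.map (Ind.mk ρN (p.1, 1)) (Ind.mk ρM (t, p.2))) fun d h1 h2 n m => by
    simp only [LinearMap.comp_apply, TensorProduct.map_tmul, Submodule.mkQ_apply]
    rw [Ind.mk_act_of_mul_eq ρN _ (γ' := (p.1, d⁻¹)) (by simp),
      Ind.mk_act_of_mul_eq ρM _ (γ' := (d * t, p.2)) (by simp [mul_assoc])]
    exact (mk_tmul_mk_eq_of_mul_left ρN ρM d (by simp) (by simp) n m).symm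

lemma smallTensorToTensor_mk (t : H) (p : K × G) (n : N) (m : M) :
    smallTensorToTensor ρN ρM t p (SmallTensor.mk ρN ρM t (n ⊗ₜ m)) =
      Submodule.Quotient.mk (Ind.mk ρN (p.1, 1) n ⊗ₜ Ind.mk ρM (t, p.2) m) :=
  rfl

noncomputable def summandToTensor (t : H) : (IndStar t) →ₗ[R] TensorInd :=
  Ind.lift (SmallTensor.starAct ρN ρM t) (smallTensorToTensor ρN ρM t) fun p z s => by
    obtain ⟨⟨k, g⟩, h, hY, hX⟩ := z
    refine LinearMap.congr_fun (SmallTensor.hom_ext ρN ρM t (f := smallTensorToTensor ρN ρM t p ∘ₗ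
      SmallTensor.starAct ρN ρM t ⟨(k, g), h, hY, hX⟩) fun n m => ?_) s
    rw [LinearMap.comp_apply, SmallTensor.starAct_mk ρN ρM t k g h hY hX,
      smallTensorToTensor_mk, smallTensorToTensor_mk,
      Ind.mk_act_of_mul_eq ρN _ (γ' := (p.1 * k, h)) (by simp),
      Ind.mk_act_of_mul_eq ρM _ (γ' := (h * t, p.2 * g)) (by simp [mul_assoc])]
    exact mk_tmul_mk_eq_of_mul_left ρN ρM h (by simp) (by simp) n m

variable (dcReps : Set H)

local notation "SumIndStar" => ⨁ t : dcReps, IndStar (t : H)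

lemma sumIndStar_hom_ext {f g : SumIndStar →ₗ[R] V}
    (h : ∀ (t : dcReps) p n m,
      f (DirectSum.lof R dcReps _ t (Ind.mk _ p (SmallTensor.mk ρN ρM t (n ⊗ₜ m)))) =
        g (DirectSum.lof R dcReps _ t (Ind.mk _ p (SmallTensor.mk ρN ρM t (n ⊗ₜ m))))) :
    f = g :=
  DirectSum.linearMap_ext R fun t => Ind.hom_ext _ fun p =>
    SmallTensor.hom_ext ρN ρM t fun n m => h t p n m

noncomputable def sumToTensor : SumIndStar →ₗ[R] TensorInd :=
  DirectSum.toModule R dcReps _ fun t => summandToTensor ρN ρM t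

lemma sumToTensor_lof_mk (t : dcReps) (p : K × G) (n : N) (m : M) :
    sumToTensor ρN ρM dcReps
        (DirectSum.lof R dcReps _ t (Ind.mk _ p (SmallTensor.mk ρN ρM t (n ⊗ₜ m)))) =
      Submodule.Quotient.mk (Ind.mk ρN (p.1, 1) n ⊗ₜ Ind.mk ρM (t, p.2) m) := by
  simp [sumToTensor, summandToTensor, smallTensorToTensor_mk]

lemma sumToTensor_comp_directSum (p : K × G) :
    sumToTensor ρN ρM dcReps ∘ₗ
        Representation.directSum (fun t : dcReps => Ind.act (SmallTensor.starAct ρN ρM t)) p =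
      balancedAct (Ind.act ρN) (Ind.act ρM) p ∘ₗ sumToTensor ρN ρM dcReps :=
  sumIndStar_hom_ext ρN ρM dcReps fun t q n m => by
    simp [sumToTensor_lof_mk, balancedAct_mk]

noncomputable def tensorToSummand (t : H) {y : K × H} (hy : y ∈ Y) {x : H × G} (hx : x ∈ X)
    (k : K) (g : G) : N ⊗[R] M →ₗ[R] IndStar t :=
  Ind.mk _ (k * y.1, g * x.2⁻¹) ∘ₗ SmallTensor.mk ρN ρM t ∘ₗ
    TensorProduct.map (ρN ⟨y⁻¹, Y.inv_mem hy⟩) (ρM ⟨x, hx⟩)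

lemma tensorToSummand_congr {t : H} {y y' : K × H} (hy : y ∈ Y) (hy' : y' ∈ Y) {x x' : H × G}
    (hx : x ∈ X) (hx' : x' ∈ X) (hyx : y.2 * t * x.1 = y'.2 * t * x'.1) (k : K) (g : G) :
    tensorToSummand ρN ρM t hy hx k g = tensorToSummand ρN ρM t hy' hx' k g := by
  refine TensorProduct.ext' fun n m => ?_
  have ha : y'⁻¹ * y ∈ Y := Y.mul_mem (Y.inv_mem hy') hy
  have key : t⁻¹ * (y'.2⁻¹ * y.2) * t = x'.1 * x.1⁻¹ :=
    calc t⁻¹ * (y'.2⁻¹ * y.2) * t = t⁻¹ * y'.2⁻¹ * (y.2 * t * x.1) * x.1⁻¹ := by group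
      _ = x'.1 * x.1⁻¹ := by rw [hyx]; group
  have hb : (t⁻¹ * (y'⁻¹ * y).2 * t, (x' * x⁻¹).2) ∈ X := by
    rw [show t⁻¹ * (y'⁻¹ * y).2 * t = (x' * x⁻¹).1 from key]
    exact X.mul_mem hx' (X.inv_mem hx)
  simp only [tensorToSummand, LinearMap.comp_apply, TensorProduct.map_tmul]
  rw [← Ind.mk_act_of_mul_eq (SmallTensor.starAct ρN ρM t) (x := ((y'⁻¹ * y).1, (x' * x⁻¹).2))
      ⟨_, ha, hb⟩ (γ := (k * y'.1, g * x'.2⁻¹)) (Prod.ext (by simp [mul_assoc]) (by simp)),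
    SmallTensor.starAct_mk ρN ρM t (y'⁻¹ * y).1 (x' * x⁻¹).2 (y'⁻¹ * y).2 ha hb,
    act_act_of_mul_eq ρN ha _ (Y.inv_mem hy') (by group),
    act_act_of_mul_eq ρM hb hx hx' (Prod.ext (by simp [key]) (by simp))]

variable {dcReps} (hreps : IsDoubleCosetReps X Y dcReps)

noncomputable def tensorToSumAt (k : K) (w : H) (g : G) : N ⊗[R] M →ₗ[R] SumIndStar :=
  DirectSum.lof R dcReps _ ⟨_, (hreps.exists_decomposition w).choose_spec.1⟩ ∘ₗ
    tensorToSummand ρN ρM _ (hreps.exists_decomposition w).choose_spec.2.1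
      (hreps.exists_decomposition w).choose_spec.2.2.1 k g

lemma tensorToSumAt_eq {w t : H} {y : K × H} {x : H × G} (ht : t ∈ dcReps) (hy : y ∈ Y)
    (hx : x ∈ X) (hw : w = y.2 * t * x.1) (k : K) (g : G) :
    tensorToSumAt ρN ρM hreps k w g =
      DirectSum.lof R dcReps _ ⟨t, ht⟩ ∘ₗ tensorToSummand ρN ρM t hy hx k g := by
  obtain ⟨ht', hy', hx', hw'⟩ := (hreps.exists_decomposition w).choose_spec
  obtain rfl := hreps.rep_eq ht' hy' hx' hw' ht hy hx hw
  rw [tensorToSumAt, tensorToSummand_congr ρN ρM hy' hy hx' hx (hw'.symm.trans hw)]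

lemma tensorToSumAt_act_tmul (k : K) (w : H) (g : G) {y : K × H} (hy : y ∈ Y) (n : N)
    (m : M) :
    tensorToSumAt ρN ρM hreps k w g (ρN ⟨y, hy⟩ n ⊗ₜ m) =
      tensorToSumAt ρN ρM hreps (k * y.1) (y.2⁻¹ * w) g (n ⊗ₜ m) := by
  obtain ⟨⟨t, y₀, x₀⟩, ht, hy₀, hx₀, hw⟩ := hreps.exists_decomposition w
  have hy₁ : y⁻¹ * y₀ ∈ Y := Y.mul_mem (Y.inv_mem hy) hy₀
  rw [tensorToSumAt_eq ρN ρM hreps ht hy₀ hx₀ hw,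
    tensorToSumAt_eq ρN ρM hreps ht hy₁ hx₀ (by simp [hw, mul_assoc])]
  simp only [tensorToSummand, LinearMap.comp_apply, TensorProduct.map_tmul]
  rw [act_act_of_mul_eq ρN (Y.inv_mem hy₀) hy (Y.inv_mem hy₁) (by group)]
  simp [mul_assoc]

lemma tensorToSumAt_tmul_act (k : K) (w : H) (g : G) {x : H × G} (hx : x ∈ X) (n : N)
    (m : M) :
    tensorToSumAt ρN ρM hreps k w g (n ⊗ₜ ρM ⟨x, hx⟩ m) =
      tensorToSumAt ρN ρM hreps k (w * x.1) (g * x.2) (n ⊗ₜ m) := by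
  obtain ⟨⟨t, y₀, x₀⟩, ht, hy₀, hx₀, hw⟩ := hreps.exists_decomposition w
  have hx₁ : x₀ * x ∈ X := X.mul_mem hx₀ hx
  rw [tensorToSumAt_eq ρN ρM hreps ht hy₀ hx₀ hw,
    tensorToSumAt_eq ρN ρM hreps ht hy₀ hx₁ (by simp [hw, mul_assoc])]
  simp only [tensorToSummand, LinearMap.comp_apply, TensorProduct.map_tmul]
  rw [act_act_of_mul_eq ρM hx₀ hx hx₁ rfl]
  simp [mul_assoc]

noncomputable def tensorToSumPairing : IndN →ₗ[R] IndM →ₗ[R] SumIndStar :=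
  Ind.lift₂ ρN ρM
    (fun p q =>
      (TensorProduct.mk R N M).compr₂ (tensorToSumAt ρN ρM hreps p.1 (p.2⁻¹ * q.1) q.2))
    (fun p q ⟨y, hy⟩ n m => by simp [tensorToSumAt_act_tmul, mul_assoc])
    (fun p q ⟨x, hx⟩ n m => by simp [tensorToSumAt_tmul_act, mul_assoc])

noncomputable def tensorToSum : TensorInd →ₗ[R] SumIndStar :=
  (rhRel IndN IndM (Ind.act ρN) (Ind.act ρM)).liftQ
    (TensorProduct.lift (tensorToSumPairing ρN ρM hreps)) <| rhRel_le_ker _ _ fun h a b => by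
      have hbal : tensorToSumPairing ρN ρM hreps ∘ₗ Ind.act ρN (1, h⁻¹) =
          (tensorToSumPairing ρN ρM hreps).compl₂ (Ind.act ρM (h, 1)) :=
        Ind.hom_ext ρN fun p => LinearMap.ext fun n => Ind.hom_ext ρM fun q =>
          LinearMap.ext fun m => by simp [tensorToSumPairing, mul_assoc]
      simpa using LinearMap.congr_fun₂ hbal a b

lemma tensorToSum_mk (p : K × H) (q : H × G) (n : N) (m : M) :
    tensorToSum ρN ρM hreps (Submodule.Quotient.mk (Ind.mk ρN p n ⊗ₜ Ind.mk ρM q m)) =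
      tensorToSumAt ρN ρM hreps p.1 (p.2⁻¹ * q.1) q.2 (n ⊗ₜ m) := by
  simp [tensorToSum, tensorToSumPairing]

lemma tensorToSum_comp_sumToTensor :
    tensorToSum ρN ρM hreps ∘ₗ sumToTensor ρN ρM dcReps = LinearMap.id :=
  sumIndStar_hom_ext ρN ρM dcReps fun t p n m => by
    rw [LinearMap.comp_apply, sumToTensor_lof_mk, tensorToSum_mk,
      tensorToSumAt_eq ρN ρM hreps t.2 Y.one_mem X.one_mem (by simp)]
    simp [tensorToSummand, act_of_eq_one]

lemma sumToTensor_comp_tensorToSum :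
    sumToTensor ρN ρM dcReps ∘ₗ tensorToSum ρN ρM hreps = LinearMap.id :=
  tensorInd_hom_ext ρN ρM fun p q n m => by
    obtain ⟨⟨t, y, x⟩, ht, hy, hx, hw : p.2⁻¹ * q.1 = y.2 * t * x.1⟩ :=
      hreps.exists_decomposition (p.2⁻¹ * q.1)
    rw [LinearMap.comp_apply, tensorToSum_mk, tensorToSumAt_eq ρN ρM hreps ht hy hx hw]
    simp only [tensorToSummand, LinearMap.comp_apply, TensorProduct.map_tmul]
    rw [sumToTensor_lof_mk,
      Ind.mk_act_of_mul_eq ρN _ (γ' := (p.1, y.2⁻¹)) (Prod.ext (by simp) (by simp)),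
      Ind.mk_act_of_mul_eq ρM _ (γ' := (t * x.1, q.2)) (Prod.ext (by simp) (by simp))]
    refine (mk_tmul_mk_eq_of_mul_left ρN ρM (p.2 * y.2) (Prod.ext (by simp) (by simp))
      (Prod.ext ?_ (by simp)) n m).symm
    rw [Prod.fst_mul, mul_assoc, ← mul_assoc y.2, ← hw, mul_inv_cancel_left]

lemma tensorToSum_comp_balancedAct (p : K × G) :
    tensorToSum ρN ρM hreps ∘ₗ balancedAct (Ind.act ρN) (Ind.act ρM) p =
      Representation.directSum (fun t : dcReps => Ind.act (SmallTensor.starAct ρN ρM t)) p ∘ₗ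
        tensorToSum ρN ρM hreps := by
  refine LinearMap.ext fun x => ?_
  have hx := LinearMap.congr_fun (sumToTensor_comp_tensorToSum ρN ρM hreps) x
  have hequiv := LinearMap.congr_fun (sumToTensor_comp_directSum ρN ρM dcReps p)
    (tensorToSum ρN ρM hreps x)
  have hinv := LinearMap.congr_fun (tensorToSum_comp_sumToTensor ρN ρM hreps)
  simp only [LinearMap.comp_apply, LinearMap.id_apply] at hx hequiv hinv ⊢
  conv_lhs => rw [← hx, ← hequiv, hinv]

end Mackey

theorem induced_bimodule_tensor_mackey_general
    (X : Subgroup (H × G)) (Y : Subgroup (K × H))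
    (ρN : Y →* Module.End R N) (ρM : X →* Module.End R M)
    (dcReps : Set H)
    (hreps : ∀ h : H, ∃! t : H, t ∈ dcReps ∧
      ∃ a ∈ Y.map (MonoidHom.snd K H), ∃ b ∈ X.map (MonoidHom.fst H G), h = a * t * b) :
    -- `Ind_Y^{K×H} N` with its `R(K×H)`-module structure:
    ∃ ρIN : (K × H) →* Module.End R (Ind R (K × H) Y N ρN),
      (∀ (p p' : K × H) (c : R) (n : N),
        ρIN p (Ind.gen R (K × H) Y N ρN p' c n) = Ind.gen R (K × H) Y N ρN (p * p') c n) ∧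
    -- `Ind_X^{H×G} M` with its `R(H×G)`-module structure:
    ∃ ρIM : (H × G) →* Module.End R (Ind R (H × G) X M ρM),
      (∀ (p p' : H × G) (c : R) (m : M),
        ρIM p (Ind.gen R (H × G) X M ρM p' c m) = Ind.gen R (H × G) X M ρM (p * p') c m) ∧
    -- the tensor product over `RH` with its `R(K×G)`-module structure:
    ∃ ρT : (K × G) →* Module.End R
        ((Ind R (K × H) Y N ρN ⊗[R] Ind R (H × G) X M ρM) ⧸ rhRel _ _ ρIN ρIM),
      (∀ (k : K) (g : G) (x : Ind R (K × H) Y N ρN) (y : Ind R (H × G) X M ρM),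
        ρT (k, g) (Submodule.Quotient.mk (x ⊗ₜ[R] y)) =
          Submodule.Quotient.mk ((ρIN (k, (1 : H)) x) ⊗ₜ[R] (ρIM ((1 : H), g) y))) ∧
    -- the action of `Y*⁽ᵗ'¹⁾X` on each `N ⊗_{R(k₂(Y) ∩ ᵗk₁(X))} ⁽ᵗ'¹⁾M`:
    ∃ ρS : ∀ t : dcReps, (starSubgroup X Y (t : H)) →*
        Module.End R (SmallTensor X Y ρN ρM (t : H)),
      (∀ (t : dcReps) (k : K) (g : G) (h : H) (hkh : (k, h) ∈ Y)
          (hhg : ((t : H)⁻¹ * h * (t : H), g) ∈ X) (n : N) (m : M),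
        ρS t ⟨(k, g), ⟨h, hkh, hhg⟩⟩
            (Submodule.Quotient.mk (n ⊗ₜ[R] m) : SmallTensor X Y ρN ρM (t : H)) =
          (Submodule.Quotient.mk ((ρN ⟨(k, h), hkh⟩ n) ⊗ₜ[R]
              (ρM ⟨((t : H)⁻¹ * h * (t : H), g), hhg⟩ m)) :
            SmallTensor X Y ρN ρM (t : H))) ∧
    -- the induced modules `Ind_{Y*⁽ᵗ'¹⁾X}^{K×G}(N ⊗ M)` with their actions:
    ∃ ρIS : ∀ t : dcReps, (K × G) →* Module.End R
        (Ind R (K × G) (starSubgroup X Y (t : H)) (SmallTensor X Y ρN ρM (t : H)) (ρS t)),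
      (∀ (t : dcReps) (p p' : K × G) (c : R) (s : SmallTensor X Y ρN ρM (t : H)),
        ρIS t p (Ind.gen R (K × G) (starSubgroup X Y (t : H)) _ (ρS t) p' c s) =
          Ind.gen R (K × G) (starSubgroup X Y (t : H)) _ (ρS t) (p * p') c s) ∧
    -- the direct sum over double coset representatives, with componentwise action:
    ∃ ρD : (K × G) →* Module.End R
        (⨁ t : dcReps, Ind R (K × G) (starSubgroup X Y (t : H))
          (SmallTensor X Y ρN ρM (t : H)) (ρS t)),
      (∀ (p : K × G) (t : dcReps) x,
        ρD p (DirectSum.lof R dcReps _ t x) = DirectSum.lof R dcReps _ t (ρIS t p x)) ∧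
    -- the Mackey isomorphism, as an equivariant `R`-linear isomorphism:
    ∃ e : ((Ind R (K × H) Y N ρN ⊗[R] Ind R (H × G) X M ρM) ⧸ rhRel _ _ ρIN ρIM) ≃ₗ[R]
        (⨁ t : dcReps, Ind R (K × G) (starSubgroup X Y (t : H))
          (SmallTensor X Y ρN ρM (t : H)) (ρS t)),
      ∀ (p : K × G) x, e (ρT p x) = ρD p (e x) := by
  refine ⟨Ind.act ρN, Ind.act_gen ρN, Ind.act ρM, Ind.act_gen ρM,
    balancedAct (Ind.act ρN) (Ind.act ρM), fun k g => balancedAct_mk _ _ (k, g),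
    fun t => SmallTensor.starAct ρN ρM t, fun t => SmallTensor.starAct_mk ρN ρM t,
    fun t => Ind.act (SmallTensor.starAct ρN ρM t), fun t => Ind.act_gen _,
    Representation.directSum fun t => Ind.act (SmallTensor.starAct ρN ρM t),
    fun p t x => by simp,
    LinearEquiv.ofLinearMap (Mackey.tensorToSum ρN ρM hreps) (Mackey.sumToTensor ρN ρM dcReps)
      (Mackey.tensorToSum_comp_sumToTensor ρN ρM hreps)
      (Mackey.sumToTensor_comp_tensorToSum ρN ρM hreps),
    fun p => LinearMap.congr_fun (Mackey.tensorToSum_comp_balancedAct ρN ρM hreps p)⟩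

/-- The main theorem (Bouc, "Bisets as categories"): for an `RX`-module `M` and an
`RY`-module `N` (with `X ≤ H × G`, `Y ≤ K × H`), there is an isomorphism of
`(RK,RG)`-bimodules (i.e. `R(K×G)`-modules)
`(Ind_Y^{K×H} N) ⊗_{RH} (Ind_X^{H×G} M) ≅
   ⨁_{t ∈ [p₂(Y)\H/p₁(X)]} Ind_{Y*⁽ᵗ'¹⁾X}^{K×G} (N ⊗_{R(k₂(Y) ∩ ᵗk₁(X))} ⁽ᵗ'¹⁾M)`,
where `(k,g) ∈ Y*⁽ᵗ'¹⁾X` acts on `N ⊗ M` by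
`k·(n ⊗ m)·g⁻¹ = (k·n·h⁻¹) ⊗ (hᵗ·m·g⁻¹)` whenever `(k,h) ∈ Y` and `(hᵗ,g) ∈ X`. -/
theorem induced_bimodule_tensor_mackey [Finite K] [Finite H] [Finite G]
    (X : Subgroup (H × G)) (Y : Subgroup (K × H))
    (ρN : Y →* Module.End R N) (ρM : X →* Module.End R M)
    (dcReps : Set H)
    (hreps : ∀ h : H, ∃! t : H, t ∈ dcReps ∧
      ∃ a ∈ Y.map (MonoidHom.snd K H), ∃ b ∈ X.map (MonoidHom.fst H G), h = a * t * b) :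
    -- `Ind_Y^{K×H} N` with its `R(K×H)`-module structure:
    ∃ ρIN : (K × H) →* Module.End R (Ind R (K × H) Y N ρN),
      (∀ (p p' : K × H) (c : R) (n : N),
        ρIN p (Ind.gen R (K × H) Y N ρN p' c n) = Ind.gen R (K × H) Y N ρN (p * p') c n) ∧
    -- `Ind_X^{H×G} M` with its `R(H×G)`-module structure:
    ∃ ρIM : (H × G) →* Module.End R (Ind R (H × G) X M ρM),
      (∀ (p p' : H × G) (c : R) (m : M),
        ρIM p (Ind.gen R (H × G) X M ρM p' c m) = Ind.gen R (H × G) X M ρM (p * p') c m) ∧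
    -- the tensor product over `RH` with its `R(K×G)`-module structure:
    ∃ ρT : (K × G) →* Module.End R
        ((Ind R (K × H) Y N ρN ⊗[R] Ind R (H × G) X M ρM) ⧸ rhRel _ _ ρIN ρIM),
      (∀ (k : K) (g : G) (x : Ind R (K × H) Y N ρN) (y : Ind R (H × G) X M ρM),
        ρT (k, g) (Submodule.Quotient.mk (x ⊗ₜ[R] y)) =
          Submodule.Quotient.mk ((ρIN (k, (1 : H)) x) ⊗ₜ[R] (ρIM ((1 : H), g) y))) ∧
    -- the action of `Y*⁽ᵗ'¹⁾X` on each `N ⊗_{R(k₂(Y) ∩ ᵗk₁(X))} ⁽ᵗ'¹⁾M`: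
    ∃ ρS : ∀ t : dcReps, (starSubgroup X Y (t : H)) →*
        Module.End R (SmallTensor X Y ρN ρM (t : H)),
      (∀ (t : dcReps) (k : K) (g : G) (h : H) (hkh : (k, h) ∈ Y)
          (hhg : ((t : H)⁻¹ * h * (t : H), g) ∈ X) (n : N) (m : M),
        ρS t ⟨(k, g), ⟨h, hkh, hhg⟩⟩
            (Submodule.Quotient.mk (n ⊗ₜ[R] m) : SmallTensor X Y ρN ρM (t : H)) =
          (Submodule.Quotient.mk ((ρN ⟨(k, h), hkh⟩ n) ⊗ₜ[R]
              (ρM ⟨((t : H)⁻¹ * h * (t : H), g), hhg⟩ m)) :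
            SmallTensor X Y ρN ρM (t : H))) ∧
    -- the induced modules `Ind_{Y*⁽ᵗ'¹⁾X}^{K×G}(N ⊗ M)` with their actions:
    ∃ ρIS : ∀ t : dcReps, (K × G) →* Module.End R
        (Ind R (K × G) (starSubgroup X Y (t : H)) (SmallTensor X Y ρN ρM (t : H)) (ρS t)),
      (∀ (t : dcReps) (p p' : K × G) (c : R) (s : SmallTensor X Y ρN ρM (t : H)),
        ρIS t p (Ind.gen R (K × G) (starSubgroup X Y (t : H)) _ (ρS t) p' c s) =
          Ind.gen R (K × G) (starSubgroup X Y (t : H)) _ (ρS t) (p * p') c s) ∧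
    -- the direct sum over double coset representatives, with componentwise action:
    ∃ ρD : (K × G) →* Module.End R
        (⨁ t : dcReps, Ind R (K × G) (starSubgroup X Y (t : H))
          (SmallTensor X Y ρN ρM (t : H)) (ρS t)),
      (∀ (p : K × G) (t : dcReps) x,
        ρD p (DirectSum.lof R dcReps _ t x) = DirectSum.lof R dcReps _ t (ρIS t p x)) ∧
    -- the Mackey isomorphism, as an equivariant `R`-linear isomorphism:
    ∃ e : ((Ind R (K × H) Y N ρN ⊗[R] Ind R (H × G) X M ρM) ⧸ rhRel _ _ ρIN ρIM) ≃ₗ[R]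
        (⨁ t : dcReps, Ind R (K × G) (starSubgroup X Y (t : H))
          (SmallTensor X Y ρN ρM (t : H)) (ρS t)),
      ∀ (p : K × G) x, e (ρT p x) = ρD p (e x) :=
  induced_bimodule_tensor_mackey_general X Y ρN ρM dcReps hreps
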